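/- Define g : ℝ → ℝ by g(x) := (4 + x + √(x(x + 8)))/(2ρ), and set γ_k := r_k · ρ^(−k) for k ≥ 1. Then γ* := (ρ − 1)(1 + ρ^(−1/2)) is the unique positive fixed point of g (i.e., the unique x > 0 with g(x) = x), γ_{k+1} = g(γ_k) for all k ≥ 1, and the sequence (γ_k) is strictly increasing with γ_k < γ* for every k ≥ 1. -/
import Mathlib


open Finset

/-- The silver ratio ρ = 1 + √2. -/
noncomputable def rho : ℝ := 1 + Real.sqrt 2

/-- Entry `i` of the silver stepsize schedule π^(k) ∈ ℝ^(2^k − 1) (0-indexed):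
π^(1) = [√2], π^(k+1) = [π^(k), β_k, π^(k)] where β_k = 1 + ρ^(k−1). -/
noncomputable def piSilver : ℕ → ℕ → ℝ
  | 0, _ => 0
  | 1, _ => Real.sqrt 2
  | k + 2, i =>
      if i < 2 ^ (k + 1) - 1 then piSilver (k + 1) i
      else if i = 2 ^ (k + 1) - 1 then 1 + rho ^ k
      else piSilver (k + 1) (i - 2 ^ (k + 1))

/-- The sequence r_k: r_1 = 4, r_{k+1} = (r_k + 4ρ^k + √(r_k(r_k + 8ρ^k)))/2. -/
noncomputable def rseq : ℕ → ℝ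
  | 0 => 0
  | 1 => 4
  | k + 2 =>
      (rseq (k + 1) + 4 * rho ^ (k + 1)
        + Real.sqrt (rseq (k + 1) * (rseq (k + 1) + 8 * rho ^ (k + 1)))) / 2

/-- α_k = 1 + (√(r_k(r_k + 8ρ^k)) − r_k)/4. -/
noncomputable def alphaSeq (k : ℕ) : ℝ :=
  1 + (Real.sqrt (rseq k * (rseq k + 8 * rho ^ k)) - rseq k) / 4

/-- Entry `i` of h_right^(k) ∈ ℝ^(2^k − 1) (0-indexed):
h_right^(1) = [3/2], h_right^(k+1) = [π^(k), α_k, h_right^(k)]. -/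
noncomputable def hright : ℕ → ℕ → ℝ
  | 0, _ => 0
  | 1, _ => 3 / 2
  | k + 2, i =>
      if i < 2 ^ (k + 1) - 1 then piSilver (k + 1) i
      else if i = 2 ^ (k + 1) - 1 then alphaSeq (k + 1)
      else hright (k + 1) (i - 2 ^ (k + 1))

/-- h_left^(k) is h_right^(k) with its entries reversed. -/
noncomputable def hleft (k i : ℕ) : ℝ := hright k (2 ^ k - 2 - i)

/-- The map g(x) = (4 + x + √(x(x + 8)))/(2ρ). -/
noncomputable def gmap (x : ℝ) : ℝ := (4 + x + Real.sqrt (x * (x + 8))) / (2 * rho)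

/-- γ_k = r_k ρ^(−k). -/
noncomputable def gammaSeq (k : ℕ) : ℝ := rseq k * rho ^ (-(k : ℤ))

/-- γ* = (ρ − 1)(1 + ρ^(−1/2)). -/
noncomputable def gammaStar : ℝ := (rho - 1) * (1 + rho ^ (-(1 : ℝ) / 2))


noncomputable def srho : ℝ := Real.sqrt rho
noncomputable def xminus : ℝ := (rho - 1) * (1 - 1 / srho)

lemma sqrt2_sq : Real.sqrt 2 ^ 2 = 2 := Real.sq_sqrt (by norm_num)

lemma rho_pos : (0:ℝ) < rho := by
  have := Real.sqrt_nonneg 2; unfold rho; linarith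

lemma rho_lb : (2.414:ℝ) < rho := by
  have h := sqrt2_sq; have h0 := Real.sqrt_nonneg 2; unfold rho; nlinarith

lemma rho_ub : rho < 2.4143 := by
  have h := sqrt2_sq; have h0 := Real.sqrt_nonneg 2; unfold rho; nlinarith

lemma rho_sq : rho ^ 2 = 2 * rho + 1 := by
  have h := sqrt2_sq; unfold rho; nlinarith [Real.sqrt_nonneg 2]

lemma srho_pos : 0 < srho := Real.sqrt_pos.2 rho_pos

lemma srho_sq : srho ^ 2 = rho := Real.sq_sqrt rho_pos.le

lemma srho_lb : (1.5536:ℝ) < srho := by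
  have h := srho_sq; have h0 := srho_pos; have := rho_lb; nlinarith

lemma srho_ub : srho < 1.554 := by
  have h := srho_sq; have h0 := srho_pos; have := rho_ub; nlinarith

lemma gammaStar_eq : gammaStar = (rho - 1) * (1 + 1 / srho) := by
  unfold gammaStar
  have h1 : (-(1:ℝ) / 2) = -(1/2 : ℝ) := by norm_num
  rw [h1, Real.rpow_neg rho_pos.le, ← Real.sqrt_eq_rpow, one_div]
  rfl

lemma gs_sum : gammaStar + xminus = 2 * (rho - 1) := by
  rw [gammaStar_eq]; unfold xminus; ring

lemma gs_prod : rho * (gammaStar * xminus) = 2 * (rho - 1) := by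
  rw [gammaStar_eq]; unfold xminus
  have hs := srho_sq
  have hne : srho ≠ 0 := ne_of_gt srho_pos
  have h2 : (rho - 1)^2 = 2 := by nlinarith [rho_sq]
  field_simp
  linear_combination (rho*(rho-1)^2 - 2*(rho-1)) * hs + rho*(rho-1) * h2

lemma quad_id (x : ℝ) :
    rho * ((rho + 1) * x ^ 2 - 4 * rho * x + 4) =
      rho * (rho + 1) * ((x - gammaStar) * (x - xminus)) := by
  linear_combination (rho*(rho+1)*x) * gs_sum - (rho+1) * gs_prod + (2*rho*x - 2) * rho_sq

lemma srho_inv : srho * (1 / srho) = 1 := by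
  rw [mul_one_div, div_self (ne_of_gt srho_pos)]

lemma gammaStar_lb : (2.32:ℝ) < gammaStar := by
  rw [gammaStar_eq]
  nlinarith [srho_lb, srho_ub, srho_pos, rho_lb, rho_ub, srho_inv]

lemma gammaStar_ub : gammaStar < 2.33 := by
  rw [gammaStar_eq]
  nlinarith [srho_lb, srho_ub, srho_pos, rho_lb, rho_ub, srho_inv]

lemma xminus_pos : 0 < xminus := by
  unfold xminus
  nlinarith [srho_lb, srho_ub, srho_pos, rho_lb, rho_ub, srho_inv]

lemma xminus_ub : xminus < 0.51 := by
  unfold xminus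
  nlinarith [srho_lb, srho_ub, srho_pos, rho_lb, rho_ub, srho_inv]

lemma quad_zero_star : (rho + 1) * gammaStar ^ 2 - 4 * rho * gammaStar + 4 = 0 := by
  have h : rho * ((rho + 1) * gammaStar ^ 2 - 4 * rho * gammaStar + 4) = 0 := by
    rw [quad_id gammaStar]; ring
  exact (mul_eq_zero.1 h).resolve_left (ne_of_gt rho_pos)

lemma hstar : Real.sqrt (gammaStar * (gammaStar + 8)) = (2 * rho - 1) * gammaStar - 4 := by
  have hnn : 0 ≤ (2 * rho - 1) * gammaStar - 4 := by
    nlinarith [gammaStar_lb, gammaStar_ub, rho_lb, rho_ub]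
  have hsq : gammaStar * (gammaStar + 8) = ((2 * rho - 1) * gammaStar - 4) ^ 2 := by
    linear_combination (-4) * quad_zero_star + (-4 * gammaStar^2) * rho_sq
  rw [hsq, Real.sqrt_sq hnn]

lemma gmap_fixed : gmap gammaStar = gammaStar := by
  unfold gmap
  rw [hstar]
  have h := rho_pos
  field_simp
  ring

lemma gmap_unique (x : ℝ) (hx : 0 < x) (hfix : gmap x = x) : x = gammaStar := by
  unfold gmap at hfix
  have hA : 0 ≤ x * (x + 8) := by positivity
  have hr := rho_pos
  have h2 : Real.sqrt (x * (x + 8)) = (2 * rho - 1) * x - 4 := by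
    have h2r : (2 * rho) ≠ 0 := by positivity
    have := (div_eq_iff h2r).1 hfix
    linarith
  have hnn : 0 ≤ (2 * rho - 1) * x - 4 := h2 ▸ Real.sqrt_nonneg _
  have hsq : x * (x + 8) = ((2 * rho - 1) * x - 4) ^ 2 := by
    rw [← h2, Real.sq_sqrt hA]
  have hz : rho * (rho + 1) * ((x - gammaStar) * (x - xminus)) = 0 := by
    rw [← quad_id x]
    linear_combination (-rho/4) * hsq + (-rho*x^2) * rho_sq
  have hne : rho * (rho + 1) ≠ 0 := by positivity
  have hor := mul_eq_zero.1 ((mul_eq_zero.1 hz).resolve_left hne)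
  rcases hor with h | h
  · linarith [sub_eq_zero.1 h]
  · exfalso
    have hxm : x = xminus := by linarith [sub_eq_zero.1 h]
    rw [hxm] at hnn
    nlinarith [xminus_pos, xminus_ub, rho_lb, rho_ub]

lemma gmap_key (x : ℝ) (hx : 0 < x) (hlt : x < gammaStar) :
    x < gmap x ∧ gmap x < gammaStar := by
  have hr := rho_pos
  have hA : 0 ≤ x * (x + 8) := by positivity
  constructor
  · unfold gmap
    rw [lt_div_iff₀ (by positivity : (0:ℝ) < 2 * rho)]
    rcases le_or_gt ((2 * rho - 1) * x) 4 with hc | hc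
    · have hpos : 0 < Real.sqrt (x * (x + 8)) :=
        Real.sqrt_pos.2 (by nlinarith)
      nlinarith
    · have hb : (0:ℝ) ≤ (2 * rho - 1) * x - 4 := by linarith
      have hxm : xminus < x := by
        nlinarith [xminus_ub, xminus_pos, rho_lb, rho_ub]
      have hqneg : (rho + 1) * x ^ 2 - 4 * rho * x + 4 < 0 := by
        have hfac : rho * (rho + 1) * ((x - gammaStar) * (x - xminus)) < 0 := by
          apply mul_neg_of_pos_of_neg (by positivity)
          exact mul_neg_of_neg_of_pos (by linarith) (by linarith)
        nlinarith [quad_id x]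
      have hlt2 : (2 * rho - 1) * x - 4 < Real.sqrt (x * (x + 8)) := by
        rw [Real.lt_sqrt hb]
        nlinarith [rho_sq]
      linarith
  · unfold gmap
    rw [div_lt_iff₀ (by positivity : (0:ℝ) < 2 * rho)]
    have hs : Real.sqrt (x * (x + 8)) < Real.sqrt (gammaStar * (gammaStar + 8)) :=
      Real.sqrt_lt_sqrt hA (by nlinarith)
    rw [hstar] at hs
    nlinarith

lemma rseq_pos : ∀ k : ℕ, 0 < rseq (k + 1) := by
  intro k
  induction k with
  | zero => show (0:ℝ) < rseq 1; rw [rseq]; norm_num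
  | succ n ih =>
      show 0 < rseq (n + 2)
      rw [rseq]
      have h1 : 0 < rho ^ (n + 1) := pow_pos rho_pos _
      have h2 := Real.sqrt_nonneg (rseq (n + 1) * (rseq (n + 1) + 8 * rho ^ (n + 1)))
      linarith

lemma gamma_recur : ∀ k : ℕ, 1 ≤ k → gammaSeq (k + 1) = gmap (gammaSeq k) := by
  intro k hk
  obtain ⟨m, rfl⟩ : ∃ m, k = m + 1 := ⟨k - 1, by omega⟩
  have hrpos : 0 < rseq (m + 1) := rseq_pos m
  have hppos : 0 < rho ^ (m + 1) := pow_pos rho_pos _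
  set r := rseq (m + 1) with hrdef
  set p := rho ^ (m + 1) with hpdef
  have hz1 : rho ^ (-((m + 1 : ℕ) : ℤ)) = p⁻¹ := by
    rw [zpow_neg, zpow_natCast]
  have hz2 : rho ^ (-((m + 2 : ℕ) : ℤ)) = (p * rho)⁻¹ := by
    rw [zpow_neg, zpow_natCast, pow_succ, ← hpdef]
  have hsqrt : Real.sqrt (r * p⁻¹ * (r * p⁻¹ + 8)) = p⁻¹ * Real.sqrt (r * (r + 8 * p)) := by
    have : r * p⁻¹ * (r * p⁻¹ + 8) = (p⁻¹) ^ 2 * (r * (r + 8 * p)) := by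
      field_simp
    rw [this, Real.sqrt_mul (sq_nonneg _), Real.sqrt_sq (by positivity)]
  have hrec : rseq (m + 2) = (r + 4 * p + Real.sqrt (r * (r + 8 * p))) / 2 := by
    rw [rseq]
  unfold gammaSeq gmap
  rw [hz1, hz2, hrec, hsqrt, ← hrdef]
  have hpne : p ≠ 0 := ne_of_gt hppos
  have hrne : rho ≠ 0 := ne_of_gt rho_pos
  field_simp
  ring

lemma gamma_mem : ∀ k : ℕ, 1 ≤ k → 0 < gammaSeq k ∧ gammaSeq k < gammaStar := by
  intro k hk
  induction k with
  | zero => omega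
  | succ n ih =>
      rcases Nat.eq_zero_or_pos n with hn | hn
      · subst hn
        have h1 : gammaSeq 1 = 4 * rho⁻¹ := by
          unfold gammaSeq
          rw [show rseq 1 = 4 from by rw [rseq], show (-((1:ℕ):ℤ)) = (-1 : ℤ) from by norm_num,
            zpow_neg_one]
        rw [h1]
        have hr := rho_pos
        have hinv : rho * rho⁻¹ = 1 := mul_inv_cancel₀ (ne_of_gt hr)
        constructor
        · positivity
        · nlinarith [rho_lb, rho_ub, gammaStar_lb]
      · have ⟨h1, h2⟩ := ih hn
        rw [gamma_recur n hn]
        have ⟨hk1, hk2⟩ := gmap_key _ h1 h2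
        exact ⟨lt_trans h1 hk1, hk2⟩

/-- `γ*` is the unique positive fixed point of `g`, `γ_{k+1} = g(γ_k)`, and `(γ_k)_{k≥1}`
is strictly increasing with `γ_k < γ*`. -/
theorem gamma_fixed_point_and_monotone :
    (gmap gammaStar = gammaStar ∧ ∀ x : ℝ, 0 < x → gmap x = x → x = gammaStar) ∧
    (∀ k : ℕ, 1 ≤ k → gammaSeq (k + 1) = gmap (gammaSeq k)) ∧
    (∀ k : ℕ, 1 ≤ k → gammaSeq k < gammaSeq (k + 1)) ∧
    (∀ k : ℕ, 1 ≤ k → gammaSeq k < gammaStar) := by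
  refine ⟨⟨gmap_fixed, fun x hx hfix => gmap_unique x hx hfix⟩, gamma_recur, ?_, ?_⟩
  · intro k hk
    have ⟨h1, h2⟩ := gamma_mem k hk
    rw [gamma_recur k hk]
    exact (gmap_key _ h1 h2).1
  · intro k hk
    exact (gamma_mem k hk).2
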